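/- For α ∈ (1/2, 1), the second derivative of t ↦ log( x^{α−1}/(x^{2α} + 2x^α cos(πα) + 1) ) evaluated at x = e^t equals −4α²(1 + cos(πα)cosh(αt))/(e^{αt} + 2cos(πα) + e^{−αt})², and this expression is positive for |t| large enough; hence the density f_{Y_α}(x) = (sin(πα)/π) x^{α−1}/(x^{2α}+2x^α cos(πα)+1) is not hyperbolically monotone when α > 1/2. -/

import Mathlib

/-!
Put `x = e^s` and `c = cos πα`. Then
`x^(α-1) / (x^(2α) + 2c x^α + 1) = e^(-s) / (2 (cosh αs + c))`, so up to an additive constant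
the log-density is `-s - log (cosh αs + c)`, with second derivative
`-α² (1 + c cosh αs) / (cosh αs + c)²`. For `α > 1/2` we have `-1 < c < 0`, and since
`cosh αs` is unbounded the numerator `1 + c cosh αs` is eventually negative, so the second derivative is
eventually positive and the log-density is not concave.
-/

open Real

noncomputable def Dexpr (α t : ℝ) : ℝ :=
  -4 * α ^ 2 * (1 + Real.cos (Real.pi * α) * Real.cosh (α * t)) /
    (Real.exp (α * t) + 2 * Real.cos (Real.pi * α) + Real.exp (-(α * t))) ^ 2

open Set

theorem not_concaveOn_univ_of_hasDerivAt_deriv_pos {f f' : ℝ → ℝ} {x₀ y : ℝ}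
    (hf : ∀ x, HasDerivAt f (f' x) x) (hf' : HasDerivAt f' y x₀) (hy : 0 < y) :
    ¬ ConcaveOn ℝ univ f := by
  intro hconc
  have hanti : AntitoneOn (deriv f) univ :=
    hconc.antitoneOn_deriv fun x _ => (hf x).differentiableAt
  rw [funext fun x => (hf x).deriv, antitoneOn_univ] at hanti
  exact hy.not_ge (hf'.deriv ▸ hanti.deriv_nonpos)

namespace Real

theorem abs_lt_cosh (x : ℝ) : |x| < cosh x :=
  cosh_abs x ▸ (self_le_sinh_iff.2 (abs_nonneg x)).trans_lt (sinh_lt_cosh _)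

section

variable {a c : ℝ}

theorem cosh_add_pos (hc : -1 < c) (x : ℝ) : 0 < cosh x + c := by
  linarith [one_le_cosh x]

theorem exp_rpow_div_eq (a c s : ℝ) :
    exp s ^ (a - 1) / (exp s ^ (2 * a) + 2 * exp s ^ a * c + 1)
      = exp (-s) / (2 * (cosh (a * s) + c)) := by
  simp only [← exp_mul]
  have hden : exp (s * (2 * a)) + 2 * exp (s * a) * c + 1
      = exp (s * a) * (2 * (cosh (a * s) + c)) := by
    have hsq : exp (s * (2 * a)) = exp (s * a) * exp (a * s) := by rw [← exp_add]; ring_nf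
    have hinv : exp (s * a) * exp (-(a * s)) = 1 := by rw [← exp_add]; ring_nf; exact exp_zero
    rw [cosh_eq]
    linear_combination hsq - hinv
  rw [hden, show s * (a - 1) = -s + s * a by ring, exp_add, mul_comm (exp (s * a)),
    mul_div_mul_right _ _ (exp_ne_zero _)]

theorem log_exp_rpow_div_eq (hc : -1 < c) (s : ℝ) :
    log (exp s ^ (a - 1) / (exp s ^ (2 * a) + 2 * exp s ^ a * c + 1))
      = -s - log 2 - log (cosh (a * s) + c) := by
  rw [exp_rpow_div_eq, log_div (exp_ne_zero _) (mul_pos two_pos (cosh_add_pos hc _)).ne',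
    log_exp, log_mul two_ne_zero (cosh_add_pos hc _).ne']
  ring

theorem hasDerivAt_log_cosh_mul_add (hc : -1 < c) (s : ℝ) :
    HasDerivAt (fun s => log (cosh (a * s) + c)) (a * sinh (a * s) / (cosh (a * s) + c)) s := by
  have h := (((hasDerivAt_id' s).const_mul a).cosh.add_const c).log (cosh_add_pos hc _).ne'
  convert h using 1
  simp only [mul_one]
  ring

theorem hasDerivAt_sinh_div_cosh_add (hc : -1 < c) (s : ℝ) :
    HasDerivAt (fun s => a * sinh (a * s) / (cosh (a * s) + c))
      (a ^ 2 * (1 + c * cosh (a * s)) / (cosh (a * s) + c) ^ 2) s := by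
  have hlin := (hasDerivAt_id' s).const_mul a
  refine ((hlin.sinh.const_mul a).fun_div (hlin.cosh.add_const c)
    (cosh_add_pos hc _).ne').congr_deriv ?_
  congr 1
  linear_combination a ^ 2 * cosh_sq (a * s)

theorem exists_forall_abs_ge_one_add_mul_cosh_neg (ha : a ≠ 0) (hc : c < 0) :
    ∃ T : ℝ, ∀ t : ℝ, T ≤ |t| → 1 + c * cosh (a * t) < 0 := by
  refine ⟨-1 / (c * |a|), fun t ht => ?_⟩
  have hat : -1 / c ≤ |a * t| := by
    calc -1 / c = |a| * (-1 / (c * |a|)) := by field_simp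
      _ ≤ |a| * |t| := mul_le_mul_of_nonneg_left ht (abs_nonneg a)
      _ = |a * t| := (abs_mul a t).symm
  have hcosh : c * cosh (a * t) < c * (-1 / c) :=
    mul_lt_mul_of_neg_left (hat.trans_lt (abs_lt_cosh _)) hc
  rw [mul_div_cancel₀ _ hc.ne] at hcosh
  linarith

end

end Real

theorem Dexpr_eq (a t : ℝ) :
    Dexpr a t
      = -(a ^ 2 * (1 + cos (π * a) * cosh (a * t)) / (cosh (a * t) + cos (π * a)) ^ 2) := by
  rw [Dexpr, show exp (a * t) + 2 * cos (π * a) + exp (-(a * t))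
      = 2 * (cosh (a * t) + cos (π * a)) by rw [cosh_eq]; ring]
  generalize cosh (a * t) + cos (π * a) = X
  ring

theorem exists_forall_abs_ge_Dexpr_pos {a : ℝ} (ha : a ≠ 0) (hc₀ : cos (π * a) < 0)
    (hc₁ : -1 < cos (π * a)) : ∃ T : ℝ, ∀ t : ℝ, T ≤ |t| → 0 < Dexpr a t := by
  obtain ⟨T, hT⟩ := exists_forall_abs_ge_one_add_mul_cosh_neg ha hc₀
  refine ⟨T, fun t ht => ?_⟩
  rw [Dexpr_eq, neg_pos]
  exact div_neg_of_neg_of_pos (mul_neg_of_pos_of_neg (by positivity) (hT t ht))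
    (pow_pos (cosh_add_pos hc₁ _) 2)

theorem Yalpha_not_HM (α : ℝ) (hα : α ∈ Set.Ioo (1/2 : ℝ) 1) :
    (∀ t : ℝ,
      deriv (deriv (fun s : ℝ => Real.log
        ((Real.exp s) ^ (α - 1) /
          ((Real.exp s) ^ (2 * α) + 2 * (Real.exp s) ^ α * Real.cos (Real.pi * α) + 1)))) t
        = Dexpr α t) ∧
    (∃ T : ℝ, ∀ t : ℝ, T ≤ |t| → 0 < Dexpr α t) ∧
    ¬ ConcaveOn ℝ Set.univ (fun t : ℝ => Real.log
        (Real.sin (Real.pi * α) / Real.pi * (Real.exp t) ^ (α - 1) /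
          ((Real.exp t) ^ (2 * α) + 2 * (Real.exp t) ^ α * Real.cos (Real.pi * α) + 1))) := by
  obtain ⟨hα₁, hα₂⟩ := hα
  have hπα : π * α < π := by nlinarith [pi_pos]
  have hc₀ : cos (π * α) < 0 :=
    cos_neg_of_pi_div_two_lt_of_lt (by nlinarith [pi_pos]) (by linarith [pi_pos])
  have hc₁ : -1 < cos (π * α) :=
    cos_pi ▸ cos_lt_cos_of_nonneg_of_le_pi (by nlinarith [pi_pos]) le_rfl hπα
  have hF' (s : ℝ) : HasDerivAt (fun s => -s - log 2 - log (cosh (α * s) + cos (π * α)))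
      (-1 - α * sinh (α * s) / (cosh (α * s) + cos (π * α))) s :=
    ((hasDerivAt_neg' s).sub_const _).sub (hasDerivAt_log_cosh_mul_add hc₁ s)
  have hF'' (t : ℝ) : HasDerivAt
      (fun s => -1 - α * sinh (α * s) / (cosh (α * s) + cos (π * α))) (Dexpr α t) t := by
    rw [Dexpr_eq]
    exact (hasDerivAt_sinh_div_cosh_add hc₁ t).const_sub (-1)
  obtain ⟨T, hT⟩ := exists_forall_abs_ge_Dexpr_pos (by linarith) hc₀ hc₁
  refine ⟨fun t => ?_, ⟨T, hT⟩, ?_⟩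
  · rw [funext (log_exp_rpow_div_eq hc₁), funext fun s => (hF' s).deriv]
    exact (hF'' t).deriv
  · have hK : 0 < sin (π * α) / π :=
      div_pos (sin_pos_of_pos_of_lt_pi (by nlinarith [pi_pos]) hπα) pi_pos
    have hlog (s : ℝ) : log (sin (π * α) / π * exp s ^ (α - 1) /
        (exp s ^ (2 * α) + 2 * exp s ^ α * cos (π * α) + 1))
          = log (sin (π * α) / π) + (-s - log 2 - log (cosh (α * s) + cos (π * α))) := by
      rw [mul_div_assoc, log_mul hK.ne', log_exp_rpow_div_eq hc₁]
      rw [exp_rpow_div_eq]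
      exact (div_pos (exp_pos _) (mul_pos two_pos (cosh_add_pos hc₁ _))).ne'
    rw [funext hlog]
    exact not_concaveOn_univ_of_hasDerivAt_deriv_pos (fun s => (hF' s).const_add _) (hF'' T)
      (hT T (le_abs_self T))
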